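/- (Conditional regret-capacity theorem.) Suppose there exists a prior probability measure w* on Θ with I_{w*}(θ;Y|X^n) = sup_w I_w(θ;Y|X^n), the supremum being over all prior probability measures w on Θ. Then the minimax batch regret satisfies min over batch predictors p̂ of sup_{θ∈Θ} R(p̂,θ) = I_{w*}(θ;Y|X^n), and the minimum is achieved by the conditional mixture predictor p̂*(y|x^n) = ∫_Θ p_θ(y) w*(dθ|x^n), where w*(dθ|x^n) = w*(dθ) p_θ(x^n)/∫_Θ p_{θ'}(x^n) w*(dθ') is the posterior of w* given x^n. -/

import Mathlib

open MeasureTheory Real Filter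

/-- `q` is a probability mass function on the finite type `B`. -/
def IsPMF {B : Type*} [Fintype B] (q : B → ℝ) : Prop :=
  (∀ y, 0 ≤ q y) ∧ ∑ y, q y = 1

/-- Probability of a tuple of `n` i.i.d. batches: `p_θ(x^n) = ∏ i, p_θ(x_i)`. -/
def prodP {Θ B : Type*} (p : Θ → B → ℝ) (n : ℕ) (θ : Θ) (x : Fin n → B) : ℝ :=
  ∏ i, p θ (x i)

/-- The batch regret `R(p̂,θ) = Σ_{x^n} p_θ(x^n) Σ_y p_θ(y) log (p_θ(y) / p̂(y|x^n))`. -/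
noncomputable def batchRegret {Θ B : Type*} [Fintype B] (p : Θ → B → ℝ) (n : ℕ)
    (phat : (Fin n → B) → B → ℝ) (θ : Θ) : ℝ :=
  ∑ x : Fin n → B, prodP p n θ x * ∑ y : B, p θ y * Real.log (p θ y / phat x y)

/-- The conditional mixture predictor
`p̂_w(y|x^n) = ∫ p_θ(y) w(dθ|x^n) = (∫ p_θ(x^n) p_θ(y) w(dθ)) / (∫ p_θ(x^n) w(dθ))`. -/
noncomputable def mixPred {Θ B : Type*} [MeasurableSpace Θ] [Fintype B]
    (p : Θ → B → ℝ) (n : ℕ) (w : Measure Θ) (x : Fin n → B) (y : B) : ℝ :=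
  (∫ θ, prodP p n θ x * p θ y ∂w) / (∫ θ, prodP p n θ x ∂w)

/-- The conditional mutual information
`I_w(θ;Y|X^n) = E[log (p_θ(Y) / p_w(Y|X^n))]`, the expectation being over the joint law
`w(dθ) p_θ(x^n) p_θ(y)`. -/
noncomputable def condMI {Θ B : Type*} [MeasurableSpace Θ] [Fintype B]
    (p : Θ → B → ℝ) (n : ℕ) (w : Measure Θ) : ℝ :=
  ∫ θ, (∑ x : Fin n → B, prodP p n θ x *
    ∑ y : B, p θ y * Real.log (p θ y / mixPred p n w x y)) ∂w

/-!
Averaging the regret of any predictor `p̂` over a prior `w` and subtracting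
`I_w = ∫ R(p̂_w, θ) w(dθ)` leaves `Σ_x p_w(x^n) KL(p̂_w(·|x^n) ‖ p̂(·|x^n)) ≥ 0` (Gibbs), so
`I_{w*} ≤ ∫ R(p̂, θ) w*(dθ) ≤ sup_θ R(p̂, θ)`. Conversely, for `θ₀ ∈ Θ` and
`w_ε = (1 - ε) w* + ε δ_{θ₀}` one has `I_{w_ε} = (1 - ε) ∫ R(p̂_{w_ε}, θ) w*(dθ) + ε R(p̂_{w_ε}, θ₀)`;
the integral is at least `I_{w*}` by the first part and `I_{w_ε} ≤ I_{w*}` by optimality, so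
`R(p̂_{w_ε}, θ₀) ≤ I_{w*}`, and `ε → 0` gives `R(p̂_{w*}, θ₀) ≤ I_{w*}`.
-/

open Finset Topology

lemma IsPMF.le_one {B : Type*} [Fintype B] {q : B → ℝ} (hq : IsPMF q) (y : B) : q y ≤ 1 :=
  hq.2 ▸ single_le_sum (fun i _ => hq.1 i) (mem_univ y)

lemma abs_mul_log_div_le {b : ℝ} (c : ℝ) (hb0 : 0 ≤ b) (hb1 : b ≤ 1) :
    |b * log (b / c)| ≤ 1 + |log c| := by
  rcases hb0.eq_or_lt with rfl | hb
  · rw [zero_mul, abs_zero]; positivity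
  rcases eq_or_ne c 0 with rfl | hc
  · simp
  rw [log_div hb.ne' hc, mul_sub]
  calc |b * log b - b * log c| ≤ |log b * b| + |b| * |log c| := by
        rw [mul_comm (log b), ← abs_mul]; exact abs_sub _ _
    _ ≤ 1 + 1 * |log c| := by
        gcongr
        · exact (abs_log_mul_self_lt b hb hb1).le
        · rwa [abs_of_pos hb]
    _ = 1 + |log c| := by rw [one_mul]

lemma mul_mul_log_div_eq {c b q : ℝ} (h : q ≠ 0 ∨ c * b = 0) :
    c * (b * log (b / q)) = c * (b * log b) - c * b * log q := by
  rcases h with hq | hcb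
  · rcases eq_or_ne b 0 with rfl | hb
    · simp
    · rw [log_div hb hq]; ring
  · rcases mul_eq_zero.1 hcb with rfl | rfl <;> simp

/-- Gibbs' inequality, for unnormalized weights `a`. -/
lemma sum_mul_log_le_sum_mul_log_div_sum {ι : Type*} [Fintype ι] {a r : ι → ℝ}
    (ha : ∀ i, 0 ≤ a i) (hr : ∀ i, 0 ≤ r i) (hr1 : ∑ i, r i ≤ 1)
    (hpos : ∀ i, 0 < a i → 0 < r i) :
    ∑ i, a i * log (r i) ≤ ∑ i, a i * log (a i / ∑ j, a j) := by
  set s := ∑ j, a j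
  have hs : 0 ≤ s := sum_nonneg fun j _ => ha j
  have hterm : ∀ i, a i * log (r i) - a i * log (a i / s) ≤ s * r i - a i := by
    intro i
    rcases (ha i).eq_or_lt with hai | hai
    · rw [← hai]; simp [mul_nonneg hs (hr i)]
    have hsi : 0 < s := hai.trans_le (single_le_sum (fun j _ => ha j) (mem_univ i))
    have hri := hpos i hai
    calc a i * log (r i) - a i * log (a i / s) = a i * log (s * r i / a i) := by
          rw [log_div (by positivity) hai.ne', log_mul hsi.ne' hri.ne',
            log_div hai.ne' hsi.ne']; ring
      _ ≤ a i * (s * r i / a i - 1) :=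
          mul_le_mul_of_nonneg_left (log_le_sub_one_of_pos (by positivity)) hai.le
      _ = s * r i - a i := by field_simp
  have := sum_le_sum fun i (_ : i ∈ univ) => hterm i
  rw [sum_sub_distrib, sum_sub_distrib, ← mul_sum] at this
  linarith [mul_le_mul_of_nonneg_left hr1 hs]

section Predictors

variable {Θ B : Type*} {p : Θ → B → ℝ} {n : ℕ}

lemma measurable_prodP [MeasurableSpace Θ] (hmeas : ∀ z, Measurable fun θ => p θ z)
    (x : Fin n → B) : Measurable fun θ => prodP p n θ x :=
  Finset.measurable_prod _ fun i _ => hmeas (x i)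

lemma measurable_prodP_mul_mul_log_div [MeasurableSpace Θ]
    (hmeas : ∀ z, Measurable fun θ => p θ z) (x : Fin n → B) (y : B) (c : ℝ) :
    Measurable fun θ => prodP p n θ x * (p θ y * log (p θ y / c)) :=
  (measurable_prodP hmeas x).mul ((hmeas y).mul ((hmeas y).div_const c).log)

variable [Fintype B]

lemma prodP_nonneg (hp : ∀ θ, IsPMF (p θ)) (θ : Θ) (x : Fin n → B) : 0 ≤ prodP p n θ x :=
  prod_nonneg fun _ _ => (hp θ).1 _

lemma prodP_le_one (hp : ∀ θ, IsPMF (p θ)) (θ : Θ) (x : Fin n → B) : prodP p n θ x ≤ 1 :=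
  prod_le_one (fun _ _ => (hp θ).1 _) fun _ _ => (hp θ).le_one _

lemma batchRegret_eq_sum (phat : (Fin n → B) → B → ℝ) (θ : Θ) :
    batchRegret p n phat θ =
      ∑ x, ∑ y, prodP p n θ x * (p θ y * log (p θ y / phat x y)) :=
  sum_congr rfl fun _ _ => mul_sum _ _ _

lemma abs_prodP_mul_mul_log_div_le (hp : ∀ θ, IsPMF (p θ)) (θ : Θ) (x : Fin n → B) (y : B)
    (c : ℝ) : |prodP p n θ x * (p θ y * log (p θ y / c))| ≤ 1 + |log c| := by
  rw [abs_mul, abs_of_nonneg (prodP_nonneg hp θ x)]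
  exact (mul_le_of_le_one_left (abs_nonneg _) (prodP_le_one hp θ x)).trans
    (abs_mul_log_div_le c ((hp θ).1 y) ((hp θ).le_one y))

end Predictors

section Mixture

variable {Θ B : Type*} [Fintype B] [MeasurableSpace Θ] {p : Θ → B → ℝ} {n : ℕ}
  {w : Measure Θ}

noncomputable def mixMarginal (p : Θ → B → ℝ) (n : ℕ) (w : Measure Θ) (x : Fin n → B) : ℝ :=
  ∫ θ, prodP p n θ x ∂w

noncomputable def mixJoint (p : Θ → B → ℝ) (n : ℕ) (w : Measure Θ) (x : Fin n → B) (y : B) :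
    ℝ :=
  ∫ θ, prodP p n θ x * p θ y ∂w

lemma mixPred_eq_div (x : Fin n → B) (y : B) :
    mixPred p n w x y = mixJoint p n w x y / mixMarginal p n w x := rfl

lemma integrable_prodP_mul [IsFiniteMeasure w] (hp : ∀ θ, IsPMF (p θ))
    (hmeas : ∀ z, Measurable fun θ => p θ z) (x : Fin n → B) (y : B) :
    Integrable (fun θ => prodP p n θ x * p θ y) w := by
  refine .of_bound ((measurable_prodP hmeas x).mul (hmeas y)).aestronglyMeasurable 1
    (ae_of_all _ fun θ => ?_)
  rw [Real.norm_eq_abs, abs_of_nonneg (mul_nonneg (prodP_nonneg hp θ x) ((hp θ).1 y))]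
  exact mul_le_one₀ (prodP_le_one hp θ x) ((hp θ).1 y) ((hp θ).le_one y)

lemma mixJoint_nonneg (hp : ∀ θ, IsPMF (p θ)) (x : Fin n → B) (y : B) :
    0 ≤ mixJoint p n w x y :=
  integral_nonneg fun θ => mul_nonneg (prodP_nonneg hp θ x) ((hp θ).1 y)

lemma sum_mixJoint [IsFiniteMeasure w] (hp : ∀ θ, IsPMF (p θ))
    (hmeas : ∀ z, Measurable fun θ => p θ z) (x : Fin n → B) :
    ∑ y, mixJoint p n w x y = mixMarginal p n w x := by
  unfold mixJoint mixMarginal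
  rw [← integral_finsetSum _ fun y _ => integrable_prodP_mul hp hmeas x y]
  simp_rw [← mul_sum, (hp _).2, mul_one]

lemma mixJoint_le_mixMarginal [IsFiniteMeasure w] (hp : ∀ θ, IsPMF (p θ))
    (hmeas : ∀ z, Measurable fun θ => p θ z) (x : Fin n → B) (y : B) :
    mixJoint p n w x y ≤ mixMarginal p n w x :=
  sum_mixJoint (w := w) hp hmeas x ▸
    single_le_sum (fun y' _ => mixJoint_nonneg hp x y') (mem_univ y)

lemma mixPred_eq_div_sum [IsFiniteMeasure w] (hp : ∀ θ, IsPMF (p θ))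
    (hmeas : ∀ z, Measurable fun θ => p θ z) (x : Fin n → B) (y : B) :
    mixPred p n w x y = mixJoint p n w x y / ∑ y', mixJoint p n w x y' := by
  rw [sum_mixJoint hp hmeas, mixPred_eq_div]

lemma mixPred_nonneg [IsFiniteMeasure w] (hp : ∀ θ, IsPMF (p θ))
    (hmeas : ∀ z, Measurable fun θ => p θ z) (x : Fin n → B) (y : B) :
    0 ≤ mixPred p n w x y := by
  rw [mixPred_eq_div_sum hp hmeas]
  exact div_nonneg (mixJoint_nonneg hp x y) (sum_nonneg fun y' _ => mixJoint_nonneg hp x y')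

lemma mixPred_pos [IsFiniteMeasure w] (hp : ∀ θ, IsPMF (p θ))
    (hmeas : ∀ z, Measurable fun θ => p θ z) {x : Fin n → B} {y : B}
    (h : 0 < mixJoint p n w x y) : 0 < mixPred p n w x y :=
  div_pos h (h.trans_le (mixJoint_le_mixMarginal hp hmeas x y))

lemma sum_mixPred_le_one [IsFiniteMeasure w] (hp : ∀ θ, IsPMF (p θ))
    (hmeas : ∀ z, Measurable fun θ => p θ z) (x : Fin n → B) :
    ∑ y, mixPred p n w x y ≤ 1 := by
  simp_rw [mixPred_eq_div, ← sum_div, sum_mixJoint hp hmeas]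
  exact div_self_le_one _

lemma integrable_prodP_mul_mul_log_div [IsFiniteMeasure w] (hp : ∀ θ, IsPMF (p θ))
    (hmeas : ∀ z, Measurable fun θ => p θ z) (x : Fin n → B) (y : B) (c : ℝ) :
    Integrable (fun θ => prodP p n θ x * (p θ y * log (p θ y / c))) w :=
  .of_bound (measurable_prodP_mul_mul_log_div hmeas x y c).aestronglyMeasurable
    (1 + |log c|) (ae_of_all _ fun θ => abs_prodP_mul_mul_log_div_le hp θ x y c)

lemma measurable_batchRegret (hmeas : ∀ z, Measurable fun θ => p θ z)
    (phat : (Fin n → B) → B → ℝ) : Measurable (batchRegret p n phat) := by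
  rw [funext (batchRegret_eq_sum phat)]
  exact Finset.measurable_sum _ fun x _ => Finset.measurable_sum _ fun y _ =>
    measurable_prodP_mul_mul_log_div hmeas x y _

lemma integrable_batchRegret [IsFiniteMeasure w] (hp : ∀ θ, IsPMF (p θ))
    (hmeas : ∀ z, Measurable fun θ => p θ z) (phat : (Fin n → B) → B → ℝ) :
    Integrable (batchRegret p n phat) w := by
  rw [funext (batchRegret_eq_sum phat)]
  exact integrable_finsetSum _ fun x _ => integrable_finsetSum _ fun y _ =>
    integrable_prodP_mul_mul_log_div hp hmeas x y _

end Mixture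

section AverageRegret

variable {Θ B : Type*} [Fintype B] [MeasurableSpace Θ] {p : Θ → B → ℝ} {n : ℕ}
  {w : Measure Θ} [IsFiniteMeasure w]

lemma integral_prodP_mul_mul_log_div (hp : ∀ θ, IsPMF (p θ))
    (hmeas : ∀ z, Measurable fun θ => p θ z) {x : Fin n → B} {y : B} {q : ℝ}
    (hq : 0 < mixJoint p n w x y → q ≠ 0) :
    ∫ θ, prodP p n θ x * (p θ y * log (p θ y / q)) ∂w =
      ∫ θ, prodP p n θ x * (p θ y * log (p θ y)) ∂w - mixJoint p n w x y * log q := by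
  have hae : ∀ᵐ θ ∂w, q ≠ 0 ∨ prodP p n θ x * p θ y = 0 := by
    rcases (mixJoint_nonneg hp x y).lt_or_eq with hJ | hJ
    · exact ae_of_all _ fun _ => Or.inl (hq hJ)
    · have := (integral_eq_zero_iff_of_nonneg
        (fun θ => mul_nonneg (prodP_nonneg hp θ x) ((hp θ).1 y))
        (integrable_prodP_mul hp hmeas x y)).1 hJ.symm
      filter_upwards [this] with θ hθ using Or.inr hθ
  rw [integral_congr_ae (hae.mono fun θ h => mul_mul_log_div_eq h),
    integral_sub (by simpa using integrable_prodP_mul_mul_log_div hp hmeas x y 1)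
      ((integrable_prodP_mul hp hmeas x y).mul_const _), integral_mul_const]
  rfl

lemma integral_batchRegret (hp : ∀ θ, IsPMF (p θ)) (hmeas : ∀ z, Measurable fun θ => p θ z)
    {phat : (Fin n → B) → B → ℝ} (hphat : ∀ x y, 0 < mixJoint p n w x y → phat x y ≠ 0) :
    ∫ θ, batchRegret p n phat θ ∂w = ∑ x, ∑ y,
      (∫ θ, prodP p n θ x * (p θ y * log (p θ y)) ∂w - mixJoint p n w x y * log (phat x y)) := by
  simp_rw [batchRegret_eq_sum]
  rw [integral_finsetSum _ fun x _ => integrable_finsetSum _ fun y _ =>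
    integrable_prodP_mul_mul_log_div hp hmeas x y _]
  refine sum_congr rfl fun x _ => ?_
  rw [integral_finsetSum _ fun y _ => integrable_prodP_mul_mul_log_div hp hmeas x y _]
  exact sum_congr rfl fun y _ => integral_prodP_mul_mul_log_div hp hmeas (hphat x y)

lemma condMI_le_integral_batchRegret (hp : ∀ θ, IsPMF (p θ))
    (hmeas : ∀ z, Measurable fun θ => p θ z) {phat : (Fin n → B) → B → ℝ}
    (hphat0 : ∀ x y, 0 ≤ phat x y) (hphat1 : ∀ x, ∑ y, phat x y ≤ 1)
    (hphat : ∀ x y, 0 < mixJoint p n w x y → 0 < phat x y) :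
    condMI p n w ≤ ∫ θ, batchRegret p n phat θ ∂w := by
  change ∫ θ, batchRegret p n (mixPred p n w) θ ∂w ≤ _
  rw [integral_batchRegret hp hmeas fun x y h => (mixPred_pos hp hmeas h).ne',
    integral_batchRegret hp hmeas fun x y h => (hphat x y h).ne']
  refine sum_le_sum fun x _ => ?_
  simp_rw [sum_sub_distrib, mixPred_eq_div_sum hp hmeas x]
  exact sub_le_sub_left (sum_mul_log_le_sum_mul_log_div_sum (mixJoint_nonneg hp x)
    (hphat0 x) (hphat1 x) (hphat x)) _

end AverageRegret

lemma le_of_tendsto_sum_min {α ι : Type*} {l : Filter α} [l.NeBot] {s : Finset ι}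
    {f : ι → α → ℝ} {c : ι → ℝ} {C : ℝ}
    (hf : ∀ i ∈ s, Tendsto (fun a => min (f i a) (c i)) l (𝓝 (c i)))
    (hC : ∀ᶠ a in l, ∑ i ∈ s, f i a ≤ C) : ∑ i ∈ s, c i ≤ C :=
  le_of_tendsto (tendsto_finsetSum s hf)
    (hC.mono fun _ h => (sum_le_sum fun _ _ => min_le_left _ _).trans h)

lemma tendsto_min_mul_mul_log_div_mix {P a N D : ℝ} (hP : 0 ≤ P) (ha : 0 ≤ a) (hN : 0 ≤ N)
    (hND : N ≤ D) :
    Tendsto (fun ε => min (P * (a * log (a / (((1 - ε) * N + ε * (P * a)) /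
        ((1 - ε) * D + ε * P))))) (P * (a * log (a / (N / D)))))
      (𝓝[>] 0) (𝓝 (P * (a * log (a / (N / D))))) := by
  rcases ha.eq_or_lt with rfl | ha
  · simp
  rcases hN.eq_or_lt with rfl | hN
  · -- `a / (0 / D) = 0` and `log 0 = 0`, while the perturbed terms are nonnegative.
    simp only [zero_div, div_zero, log_zero, mul_zero, zero_add]
    refine tendsto_const_nhds.congr' ?_
    filter_upwards [Ioo_mem_nhdsGT one_pos] with ε ⟨hε0, hε1⟩
    refine (min_eq_right ?_).symm
    rcases hP.eq_or_lt with rfl | hP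
    · simp
    refine mul_nonneg hP.le (mul_nonneg ha.le (log_nonneg ?_))
    rw [le_div_iff₀ (by positivity), one_mul, div_le_iff₀ (by nlinarith)]
    nlinarith [mul_nonneg (mul_nonneg ha.le (sub_nonneg.2 hε1.le)) hND]
  · have hD : 0 < D := hN.trans_le hND
    have hcont : Tendsto (fun ε => P * (a * log (a / (((1 - ε) * N + ε * (P * a)) /
        ((1 - ε) * D + ε * P))))) (𝓝 0) (𝓝 (P * (a * log (a / (N / D))))) := by
      have : ContinuousAt (fun ε => P * (a * log (a / (((1 - ε) * N + ε * (P * a)) /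
          ((1 - ε) * D + ε * P))))) 0 := by
        fun_prop (disch := simp only [sub_zero, one_mul, zero_mul, add_zero]; positivity)
      simpa using this.tendsto
    have := (hcont.mono_left (nhdsWithin_le_nhds (s := Set.Ioi 0))).min
      (tendsto_const_nhds (x := P * (a * log (a / (N / D)))))
    rwa [min_self] at this

section Perturbation

variable {Θ : Type*} [MeasurableSpace Θ]

noncomputable def perturbedPrior (w : Measure Θ) (θ₀ : Θ) (ε : ℝ) : Measure Θ :=
  ENNReal.ofReal (1 - ε) • w + ENNReal.ofReal ε • Measure.dirac θ₀

lemma isProbabilityMeasure_perturbedPrior (w : Measure Θ) [IsProbabilityMeasure w] (θ₀ : Θ)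
    {ε : ℝ} (hε : ε ∈ Set.Icc (0 : ℝ) 1) : IsProbabilityMeasure (perturbedPrior w θ₀ ε) := by
  constructor
  simp only [perturbedPrior, Measure.coe_add, Measure.coe_smul, Pi.add_apply, Pi.smul_apply,
    measure_univ, smul_eq_mul, mul_one]
  rw [← ENNReal.ofReal_add (by linarith [hε.2]) hε.1]
  norm_num

lemma integral_perturbedPrior {w : Measure Θ} {θ₀ : Θ} {ε : ℝ} (hε : ε ∈ Set.Icc (0 : ℝ) 1)
    {f : Θ → ℝ} (hfm : Measurable f) (hf : Integrable f w) :
    ∫ θ, f θ ∂(perturbedPrior w θ₀ ε) = (1 - ε) * ∫ θ, f θ ∂w + ε * f θ₀ := by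
  rw [perturbedPrior, integral_add_measure (hf.smul_measure ENNReal.ofReal_ne_top)
    ((integrable_dirac' hfm.stronglyMeasurable enorm_lt_top).smul_measure ENNReal.ofReal_ne_top),
    integral_smul_measure, integral_smul_measure, integral_dirac' f θ₀ hfm.stronglyMeasurable,
    ENNReal.toReal_ofReal (by linarith [hε.2]), ENNReal.toReal_ofReal hε.1, smul_eq_mul,
    smul_eq_mul]

variable {B : Type*} [Fintype B] {p : Θ → B → ℝ} {n : ℕ} {w : Measure Θ}
  [IsProbabilityMeasure w] {θ₀ : Θ} {ε : ℝ}

lemma mixJoint_perturbedPrior (hp : ∀ θ, IsPMF (p θ)) (hmeas : ∀ z, Measurable fun θ => p θ z)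
    (hε : ε ∈ Set.Icc (0 : ℝ) 1) (x : Fin n → B) (y : B) :
    mixJoint p n (perturbedPrior w θ₀ ε) x y =
      (1 - ε) * mixJoint p n w x y + ε * (prodP p n θ₀ x * p θ₀ y) :=
  integral_perturbedPrior hε ((measurable_prodP hmeas x).mul (hmeas y))
    (integrable_prodP_mul hp hmeas x y)

lemma mixMarginal_perturbedPrior (hp : ∀ θ, IsPMF (p θ))
    (hmeas : ∀ z, Measurable fun θ => p θ z) (hε : ε ∈ Set.Icc (0 : ℝ) 1) (x : Fin n → B) :
    mixMarginal p n (perturbedPrior w θ₀ ε) x =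
      (1 - ε) * mixMarginal p n w x + ε * prodP p n θ₀ x := by
  have := isProbabilityMeasure_perturbedPrior w θ₀ hε
  rw [← sum_mixJoint hp hmeas, ← sum_mixJoint hp hmeas]
  simp_rw [mixJoint_perturbedPrior hp hmeas hε, sum_add_distrib, ← mul_sum, (hp θ₀).2, mul_one]

lemma condMI_perturbedPrior (hp : ∀ θ, IsPMF (p θ)) (hmeas : ∀ z, Measurable fun θ => p θ z)
    (hε : ε ∈ Set.Icc (0 : ℝ) 1) :
    condMI p n (perturbedPrior w θ₀ ε) =
      (1 - ε) * ∫ θ, batchRegret p n (mixPred p n (perturbedPrior w θ₀ ε)) θ ∂w +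
        ε * batchRegret p n (mixPred p n (perturbedPrior w θ₀ ε)) θ₀ :=
  integral_perturbedPrior hε (measurable_batchRegret hmeas _) (integrable_batchRegret hp hmeas _)

end Perturbation

section RegretBound

variable {Θ B : Type*} [MeasurableSpace Θ] [Fintype B] {p : Θ → B → ℝ} {n : ℕ}
  {w : Measure Θ} [IsProbabilityMeasure w] {θ₀ : Θ}

lemma batchRegret_mixPred_perturbedPrior_le (hp : ∀ θ, IsPMF (p θ))
    (hmeas : ∀ z, Measurable fun θ => p θ z) {ε : ℝ} (hε : ε ∈ Set.Ioo (0 : ℝ) 1)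
    (hopt : condMI p n (perturbedPrior w θ₀ ε) ≤ condMI p n w) :
    batchRegret p n (mixPred p n (perturbedPrior w θ₀ ε)) θ₀ ≤ condMI p n w := by
  have hε' : ε ∈ Set.Icc (0 : ℝ) 1 := Set.Ioo_subset_Icc_self hε
  have := isProbabilityMeasure_perturbedPrior w θ₀ hε'
  have hle : condMI p n w ≤
      ∫ θ, batchRegret p n (mixPred p n (perturbedPrior w θ₀ ε)) θ ∂w := by
    refine condMI_le_integral_batchRegret hp hmeas (mixPred_nonneg hp hmeas)
      (sum_mixPred_le_one hp hmeas) fun x y hJ => mixPred_pos hp hmeas ?_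
    rw [mixJoint_perturbedPrior hp hmeas hε']
    have := mul_nonneg (prodP_nonneg hp θ₀ x) ((hp θ₀).1 y)
    nlinarith [hε.1, hε.2]
  -- `condMI` of the perturbed prior is `(1 - ε) * (≥ condMI p n w) + ε * (regret at θ₀)`.
  rw [condMI_perturbedPrior hp hmeas hε'] at hopt
  nlinarith [hε.1, hε.2]

lemma batchRegret_mixPred_le_condMI (hp : ∀ θ, IsPMF (p θ))
    (hmeas : ∀ z, Measurable fun θ => p θ z)
    (hopt : ∀ ε ∈ Set.Ioo (0 : ℝ) 1, condMI p n (perturbedPrior w θ₀ ε) ≤ condMI p n w) :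
    batchRegret p n (mixPred p n w) θ₀ ≤ condMI p n w := by
  have hbound : ∀ᶠ ε in 𝓝[>] 0,
      batchRegret p n (mixPred p n (perturbedPrior w θ₀ ε)) θ₀ ≤ condMI p n w := by
    filter_upwards [Ioo_mem_nhdsGT one_pos] with ε hε
      using batchRegret_mixPred_perturbedPrior_le hp hmeas hε (hopt ε hε)
  -- Let `ε → 0`: each term of the regret is lower semicontinuous in `ε`.
  simp_rw [batchRegret_eq_sum, ← Fintype.sum_prod_type'] at hbound ⊢
  refine le_of_tendsto_sum_min (fun xy _ => ?_) hbound
  refine (tendsto_min_mul_mul_log_div_mix (prodP_nonneg hp θ₀ xy.1) ((hp θ₀).1 xy.2)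
    (mixJoint_nonneg hp xy.1 xy.2) ?_).congr' ?_
  · exact mixJoint_le_mixMarginal hp hmeas xy.1 xy.2
  · filter_upwards [Ioo_mem_nhdsGT one_pos] with ε hε
    rw [mixPred_eq_div, mixJoint_perturbedPrior hp hmeas (Set.Ioo_subset_Icc_self hε),
      mixMarginal_perturbedPrior hp hmeas (Set.Ioo_subset_Icc_self hε)]
    rfl

end RegretBound

theorem conditional_regret_capacity_general
    {𝒳 Θ : Type*} [Fintype 𝒳] [MeasurableSpace Θ]
    (ℓ n : ℕ)
    (p : Θ → (Fin ℓ → 𝒳) → ℝ)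
    (hp : ∀ θ, IsPMF (p θ))
    (hmeas : ∀ z : Fin ℓ → 𝒳, Measurable fun θ => p θ z)
    (wstar : Measure Θ) [IsProbabilityMeasure wstar]
    (hopt : ∀ w : Measure Θ, IsProbabilityMeasure w →
      condMI p n w ≤ condMI p n wstar) :
    (∀ θ : Θ, batchRegret p n (mixPred p n wstar) θ ≤ condMI p n wstar)
    ∧ (∀ phat : (Fin n → Fin ℓ → 𝒳) → (Fin ℓ → 𝒳) → ℝ,
        (∀ x, IsPMF (phat x)) → (∀ x y, 0 < phat x y) →
        ∀ C : ℝ, (∀ θ : Θ, batchRegret p n phat θ ≤ C) →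
          condMI p n wstar ≤ C) := by
  refine ⟨fun θ₀ => batchRegret_mixPred_le_condMI hp hmeas fun ε hε =>
    hopt _ (isProbabilityMeasure_perturbedPrior wstar θ₀ (Set.Ioo_subset_Icc_self hε)),
    fun phat hphat hpos C hC => ?_⟩
  calc condMI p n wstar ≤ ∫ θ, batchRegret p n phat θ ∂wstar :=
        condMI_le_integral_batchRegret hp hmeas (fun x y => (hphat x).1 y)
          (fun x => (hphat x).2.le) fun x y _ => hpos x y
    _ ≤ ∫ _, C ∂wstar := integral_mono (integrable_batchRegret hp hmeas phat)
        (integrable_const C) hC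
    _ = C := by simp

/-- **Conditional regret-capacity theorem.** If a prior probability measure `w*`
attains `sup_w I_w(θ;Y|X^n)`, then the minimax batch regret equals `I_{w*}(θ;Y|X^n)` and is
achieved by the conditional mixture predictor `p̂*` of `w*`:
(i) `R(p̂*,θ) ≤ I_{w*}(θ;Y|X^n)` for all `θ` (so `sup_θ R(p̂*,θ) ≤ I_{w*}`), and
(ii) for every (everywhere positive) batch predictor `p̂`, any upper bound `C` of
`θ ↦ R(p̂,θ)` satisfies `C ≥ I_{w*}(θ;Y|X^n)` (so `sup_θ R(p̂,θ) ≥ I_{w*}`). -/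
theorem conditional_regret_capacity
    {𝒳 Θ : Type*} [Fintype 𝒳] [Nonempty 𝒳] [MeasurableSpace Θ]
    (ℓ n : ℕ) (hℓ : 0 < ℓ) (hn : 0 < n)
    (p : Θ → (Fin ℓ → 𝒳) → ℝ)
    (hp : ∀ θ, IsPMF (p θ))
    (hmeas : ∀ z : Fin ℓ → 𝒳, Measurable fun θ => p θ z)
    (wstar : Measure Θ) [IsProbabilityMeasure wstar]
    (hopt : ∀ w : Measure Θ, IsProbabilityMeasure w →
      condMI p n w ≤ condMI p n wstar) :
    (∀ θ : Θ, batchRegret p n (mixPred p n wstar) θ ≤ condMI p n wstar)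
    ∧ (∀ phat : (Fin n → Fin ℓ → 𝒳) → (Fin ℓ → 𝒳) → ℝ,
        (∀ x, IsPMF (phat x)) → (∀ x y, 0 < phat x y) →
        ∀ C : ℝ, (∀ θ : Θ, batchRegret p n phat θ ≤ C) →
          condMI p n wstar ≤ C) :=
  conditional_regret_capacity_general ℓ n p hp hmeas wstar hopt
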